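/- Let H ∈ ℂ^{n×n} be Hermitian with eigenvalues λ_1 ≥ ⋯ ≥ λ_n satisfying λ_k > λ_{k+1}, and let P_* ∈ ℂ^{n×k} have orthonormal columns spanning the invariant subspace of H associated with the k largest eigenvalues. For any P ∈ ℂ^{n×k} with orthonormal columns, setting η = tr(P_*ᴴ H P_*) − tr(Pᴴ H P), one has ‖sin Θ(R(P), R(P_*))‖_F ≤ √(η / (λ_k − λ_{k+1})). -/

import Mathlib

open scoped ComplexOrder
open Matrix

/-- The tuple `f` rearranged into decreasing order; `sortedDesc f 0` is the largest entry. -/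
noncomputable def sortedDesc {m : ℕ} (f : Fin m → ℝ) : Fin m → ℝ :=
  fun i => (f ∘ Tuple.sort f) i.rev

/-- The singular values of a complex matrix, in decreasing order. -/
noncomputable def sv {n k : ℕ} (B : Matrix (Fin n) (Fin k) ℂ) : Fin k → ℝ :=
  sortedDesc fun i =>
    Real.sqrt ((Matrix.posSemidef_conjTranspose_mul_self B).isHermitian.eigenvalues i)

/-- The trace (nuclear) norm: the sum of the singular values. -/
noncomputable def trNorm {n k : ℕ} (B : Matrix (Fin n) (Fin k) ℂ) : ℝ := ∑ i, sv B i

/-- The Frobenius norm. -/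
noncomputable def frobNorm {n k : ℕ} (A : Matrix (Fin n) (Fin k) ℂ) : ℝ :=
  Real.sqrt (∑ i, ∑ j, ‖A i j‖ ^ 2)

/-- `‖sin Θ(R(X), R(Y))‖_F` where `Θ` is the diagonal matrix of canonical angles
`θ_i = arccos σ_i(Xᴴ Y)` between the column spaces of `X` and `Y`. -/
noncomputable def sinThetaF {n k : ℕ} (X Y : Matrix (Fin n) (Fin k) ℂ) : ℝ :=
  Real.sqrt (∑ i, Real.sin (Real.arccos (sv (Xᴴ * Y) i)) ^ 2)

/-- The smallest singular value. -/
noncomputable def smin {n k : ℕ} (B : Matrix (Fin n) (Fin k) ℂ) : ℝ := ⨅ i, sv B i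

/-- The spectral norm (largest singular value). -/
noncomputable def s2norm {n k : ℕ} (B : Matrix (Fin n) (Fin k) ℂ) : ℝ := ⨆ i, sv B i

/-- The orthonormal polar factor `B (Bᴴ B)^{-1/2}` (for `B` of full column rank). -/
noncomputable def polarFactor {n k : ℕ} (B : Matrix (Fin n) (Fin k) ℂ) :
    Matrix (Fin n) (Fin k) ℂ :=
  B * (((Matrix.posSemidef_conjTranspose_mul_self B).1.eigenvectorUnitary : Matrix (Fin k) (Fin k) ℂ) *
    diagonal ((↑) ∘ (√·) ∘ (Matrix.posSemidef_conjTranspose_mul_self B).1.eigenvalues) *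
    (star (Matrix.posSemidef_conjTranspose_mul_self B).1.eigenvectorUnitary : Matrix (Fin k) (Fin k) ℂ))⁻¹

/-- Eigenvalues of a Hermitian matrix, in decreasing order. -/
noncomputable def eigsDesc {n : ℕ} {H : Matrix (Fin n) (Fin n) ℂ} (hH : H.IsHermitian) :
    Fin n → ℝ :=
  sortedDesc hH.eigenvalues

/-
Since `R(P_*)` is `H`-invariant, `H = K H K + (1 - K) H (1 - K)` with `K = P_* P_*ᴴ`. On `R(P_*)`
the compression of `H` is `≥ λ_k`; on the orthogonal complement it is `≤ λ_{k+1}`, because the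
diagonal `c_i = u_iᴴ K u_i` of `K` in an eigenbasis `(u_i)` of `H` satisfies `0 ≤ c ≤ 1`,
`∑ c_i = k` and attains the sum of the `k` largest eigenvalues, which forces `c_i = 1` whenever
`λ_i > λ_{k+1}`. Splitting `tr (Pᴴ H P)` along `K` then gives
`η ≥ (λ_k - λ_{k+1}) (k - ‖P_*ᴴ P‖_F²)`, and `k - ‖P_*ᴴ P‖_F² = ∑ sin² θ_i`.
-/

lemma sum_sortedDesc {m : ℕ} (f : Fin m → ℝ) (g : ℝ → ℝ) :
    ∑ i, g (sortedDesc f i) = ∑ i, g (f i) :=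
  Equiv.sum_comp (Fin.revPerm.trans (Tuple.sort f)) (g ∘ f)

lemma antitone_sortedDesc {m : ℕ} (f : Fin m → ℝ) : Antitone (sortedDesc f) :=
  fun _ _ h => Tuple.monotone_sort f (Fin.rev_le_rev.mpr h)

lemma exists_sortedDesc_eq {m : ℕ} (f : Fin m → ℝ) (i : Fin m) :
    ∃ j, sortedDesc f j = f i :=
  ⟨((Tuple.sort f).symm i).rev, by simp [sortedDesc]⟩

lemma lt_sortedDesc_iff {m k : ℕ} (f : Fin m → ℝ) (hkm : k < m)
    (hgap : sortedDesc f ⟨k, hkm⟩ < sortedDesc f ⟨k - 1, (k.sub_le 1).trans_lt hkm⟩)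
    (i : Fin m) :
    sortedDesc f ⟨k, hkm⟩ < sortedDesc f i ↔ (i : ℕ) < k := by
  constructor
  · intro h
    by_contra! hki
    exact (antitone_sortedDesc f (Fin.le_def.mpr hki)).not_gt h
  · intro hik
    exact hgap.trans_le (antitone_sortedDesc f (Fin.le_def.mpr (Nat.le_sub_one_of_lt hik)))

lemma sum_filter_lt_sortedDesc {m k : ℕ} (f : Fin m → ℝ) (hkm : k < m)
    (hgap : sortedDesc f ⟨k, hkm⟩ < sortedDesc f ⟨k - 1, (k.sub_le 1).trans_lt hkm⟩)
    (g : ℝ → ℝ) :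
    ∑ i with sortedDesc f ⟨k, hkm⟩ < f i, g (f i) =
      ∑ j : Fin k, g (sortedDesc f (Fin.castLE hkm.le j)) := by
  have htop : Finset.univ.map (Fin.castLEEmb hkm.le) =
      ({i | sortedDesc f ⟨k, hkm⟩ < sortedDesc f i} : Finset (Fin m)) := by
    ext i
    simp only [Finset.mem_map, Finset.mem_univ, true_and, Finset.mem_filter,
      lt_sortedDesc_iff f hkm hgap]
    exact ⟨fun ⟨j, hj⟩ => hj ▸ j.isLt, fun h => ⟨⟨i, h⟩, rfl⟩⟩
  calc ∑ i with sortedDesc f ⟨k, hkm⟩ < f i, g (f i)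
      = ∑ i with sortedDesc f ⟨k, hkm⟩ < sortedDesc f i, g (sortedDesc f i) := by
        simp only [Finset.sum_filter]
        exact (sum_sortedDesc f fun x => if sortedDesc f ⟨k, hkm⟩ < x then g x else 0).symm
    _ = ∑ j : Fin k, g (sortedDesc f (Fin.castLE hkm.le j)) := by
        rw [← htop, Finset.sum_map]
        rfl

lemma sortedDesc_sub_one_le {m k : ℕ} (hkm : k < m) {f : Fin k → ℝ} {g : Fin m → ℝ}
    (hfg : ∀ i, sortedDesc f i = sortedDesc g (Fin.castLE hkm.le i)) (j : Fin k) :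
    sortedDesc g ⟨k - 1, (k.sub_le 1).trans_lt hkm⟩ ≤ f j := by
  obtain ⟨j', hj'⟩ := exists_sortedDesc_eq f j
  rw [← hj', hfg]
  exact antitone_sortedDesc g (Fin.le_def.mpr (Nat.le_sub_one_of_lt j'.isLt))

lemma sum_filter_lt_sortedDesc_eq_sum {m k : ℕ} (hkm : k < m) {f : Fin k → ℝ}
    {g : Fin m → ℝ}
    (hfg : ∀ i, sortedDesc f i = sortedDesc g (Fin.castLE hkm.le i))
    (hgap : sortedDesc g ⟨k, hkm⟩ < sortedDesc g ⟨k - 1, (k.sub_le 1).trans_lt hkm⟩)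
    (φ : ℝ → ℝ) :
    ∑ i with sortedDesc g ⟨k, hkm⟩ < g i, φ (g i) = ∑ j, φ (f j) := by
  simp only [sum_filter_lt_sortedDesc g hkm hgap, ← hfg, sum_sortedDesc]

open Finset in
theorem eq_one_of_sum_filter_le_sum_mul {ι : Type*} [Fintype ι] {μ c : ι → ℝ} {b : ℝ}
    (hc0 : ∀ i, 0 ≤ c i) (hc1 : ∀ i, c i ≤ 1) (hsum : ∑ i, c i = #{i | b < μ i})
    (hle : ∑ i with b < μ i, μ i ≤ ∑ i, μ i * c i) {i : ι} (hi : b < μ i) : c i = 1 := by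
  set t : ι → ℝ := fun j => (μ j - b) * ((if b < μ j then 1 else 0) - c j)
  have ht : ∀ j ∈ univ, 0 ≤ t j := by
    intro j _
    by_cases hj : b < μ j
    · simpa [t, hj] using mul_nonneg (sub_nonneg.mpr hj.le) (sub_nonneg.mpr (hc1 j))
    · have hμ : μ j - b ≤ 0 := by linarith [not_lt.mp hj]
      simpa [t, hj] using mul_nonneg_of_nonpos_of_nonpos hμ (neg_nonpos.mpr (hc0 j))
  have hsum_t : ∑ j, t j ≤ 0 := by
    have : ∑ j, t j = (∑ j with b < μ j, μ j - b * #{j | b < μ j}) - ∑ j, μ j * c j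
        + b * ∑ j, c j := by
      simp only [t, mul_sub, mul_ite, mul_one, mul_zero, sub_mul, sum_sub_distrib, ← sum_filter,
        sum_const, nsmul_eq_mul, mul_sum]
      ring
    rw [this, hsum]
    linarith
  have hti : t i = 0 :=
    (sum_eq_zero_iff_of_nonneg ht).mp (le_antisymm hsum_t (sum_nonneg ht)) i (mem_univ i)
  simp only [t, hi, if_true, mul_eq_zero] at hti
  rcases hti with h | h <;> linarith

namespace Matrix

variable {ι κ : Type*} [Fintype ι] [Fintype κ]

theorem isIdempotentElem_mul_conjTranspose [DecidableEq κ] {C : Matrix ι κ ℂ}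
    (hC : Cᴴ * C = 1) : IsIdempotentElem (C * Cᴴ) := by
  rw [IsIdempotentElem, Matrix.mul_assoc, ← Matrix.mul_assoc Cᴴ, hC, Matrix.one_mul]

variable [DecidableEq ι]

open scoped MatrixOrder in
theorem PosSemidef.trace_mul_nonneg {A B : Matrix ι ι ℂ} (hA : A.PosSemidef)
    (hB : B.PosSemidef) : 0 ≤ (A * B).trace := by
  obtain ⟨C, rfl⟩ := CStarAlgebra.nonneg_iff_eq_star_mul_self.mp hB.nonneg
  rw [star_eq_conjTranspose, ← Matrix.mul_assoc, trace_mul_cycle]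
  exact (hA.mul_mul_conjTranspose_same C).trace_nonneg

theorem PosSemidef.apply_eq_zero_of_diag_eq_zero {A : Matrix ι ι ℂ}
    (hA : A.PosSemidef) {i : ι} (hii : A i i = 0) (j : ι) : A j i = 0 := by
  have hcol : A *ᵥ Pi.single i 1 = 0 := by
    rw [← hA.dotProduct_mulVec_zero_iff]
    simpa [mulVec_single, single_dotProduct, Pi.star_single] using hii
  simpa using congrFun hcol j

theorem PosSemidef.mul_diagonal_mul_self {R : Matrix ι ι ℂ} (hR : R.PosSemidef)
    {d : ι → ℝ} (hd : ∀ i, d i < 0 → R i i = 0) :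
    (R * diagonal (fun i => (d i : ℂ)) * R).PosSemidef := by
  have hRd : R * diagonal (fun i => (d i : ℂ)) =
      R * diagonal (fun i => ((max (d i) 0 : ℝ) : ℂ)) := by
    ext j i
    simp only [mul_diagonal]
    rcases lt_or_ge (d i) 0 with hi | hi
    · simp [hR.apply_eq_zero_of_diag_eq_zero (hd i hi) j]
    · rw [max_eq_left hi]
  have hdiag : (diagonal (fun i => ((max (d i) 0 : ℝ) : ℂ))).PosSemidef :=
    PosSemidef.diagonal fun i => Complex.zero_le_real.mpr (le_max_right _ _)
  rw [hRd]
  nth_rewrite 1 [← hR.isHermitian.eq]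
  exact hdiag.conjTranspose_mul_mul_same R

theorem IsHermitian.posSemidef_sub_smul_one {A : Matrix ι ι ℂ}
    (hA : A.IsHermitian) {c : ℝ} (hc : ∀ i, c ≤ hA.eigenvalues i) :
    (A - (c : ℂ) • 1).PosSemidef := by
  open scoped MatrixOrder in
  have : algebraMap ℝ (Matrix ι ι ℂ) c ≤ A := by
    rw [algebraMap_le_iff_le_spectrum (ha := hA.isSelfAdjoint),
      hA.spectrum_real_eq_range_eigenvalues]
    rintro _ ⟨i, rfl⟩
    exact hc i
  simpa [Algebra.algebraMap_eq_smul_one, le_iff] using this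

theorem IsHermitian.eigenvalues_le {A : Matrix ι ι ℂ} (hA : A.IsHermitian)
    {c : ℝ} (hc : ((c : ℂ) • 1 - A).PosSemidef) (i : ι) : hA.eigenvalues i ≤ c := by
  open scoped MatrixOrder in
  have : A ≤ algebraMap ℝ (Matrix ι ι ℂ) c := by
    simpa [Algebra.algebraMap_eq_smul_one, le_iff] using hc
  rw [le_algebraMap_iff_spectrum_le (ha := hA.isSelfAdjoint),
    hA.spectrum_real_eq_range_eigenvalues] at this
  exact this _ ⟨i, rfl⟩

theorem posSemidef_one_sub_mul_conjTranspose [DecidableEq κ]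
    {C : Matrix ι κ ℂ} (hC : Cᴴ * C = 1) : (1 - C * Cᴴ).PosSemidef := by
  have hQ : (1 - C * Cᴴ)ᴴ = 1 - C * Cᴴ := by simp [conjTranspose_sub, conjTranspose_mul]
  have := posSemidef_conjTranspose_mul_self (1 - C * Cᴴ)
  rwa [hQ, (isIdempotentElem_mul_conjTranspose hC).one_sub.eq] at this

theorem IsHermitian.spectral_theorem_mul {A : Matrix ι ι ℂ} (hA : A.IsHermitian) :
    A = (hA.eigenvectorUnitary : Matrix ι ι ℂ) * diagonal (fun i => (hA.eigenvalues i : ℂ)) *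
      (hA.eigenvectorUnitary : Matrix ι ι ℂ)ᴴ := by
  have := hA.spectral_theorem
  rwa [Unitary.conjStarAlgAut_apply, star_eq_conjTranspose] at this

theorem IsHermitian.posSemidef_mul_smul_one_sub_mul {H Q : Matrix ι ι ℂ} (hH : H.IsHermitian)
    (hQ : Q.PosSemidef) {b : ℝ}
    (hQb : ∀ i, b < hH.eigenvalues i → ((hH.eigenvectorUnitary : Matrix ι ι ℂ)ᴴ * Q *
      (hH.eigenvectorUnitary : Matrix ι ι ℂ)) i i = 0) :
    (Q * ((b : ℂ) • 1 - H) * Q).PosSemidef := by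
  set U : Matrix ι ι ℂ := (hH.eigenvectorUnitary : Matrix ι ι ℂ)
  set R := Uᴴ * Q * U
  have hUU : U * Uᴴ = 1 := mem_unitaryGroup_iff.mp hH.eigenvectorUnitary.2
  have hbH : (b : ℂ) • 1 - H =
      U * diagonal (fun i => ((b - hH.eigenvalues i : ℝ) : ℂ)) * Uᴴ := by
    have hbD : diagonal (fun i => ((b - hH.eigenvalues i : ℝ) : ℂ)) =
        (b : ℂ) • 1 - diagonal (fun i => (hH.eigenvalues i : ℂ)) := by
      ext i j
      by_cases hij : i = j <;> simp [hij]
    rw [hbD, Matrix.mul_sub, Matrix.sub_mul, Matrix.mul_smul, Matrix.mul_one, Matrix.smul_mul,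
      hUU, ← hH.spectral_theorem_mul]
  have hconj : Q * ((b : ℂ) • 1 - H) * Q =
      U * (R * diagonal (fun i => ((b - hH.eigenvalues i : ℝ) : ℂ)) * R) * Uᴴ := by
    calc Q * ((b : ℂ) • 1 - H) * Q
        = (U * Uᴴ) * Q * ((b : ℂ) • 1 - H) * Q * (U * Uᴴ) := by
          rw [hUU, Matrix.one_mul, Matrix.mul_one]
      _ = _ := by simp only [hbH, R, Matrix.mul_assoc]
  rw [hconj]
  refine (PosSemidef.mul_diagonal_mul_self (hQ.conjTranspose_mul_mul_same U) fun i hi => ?_)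
    |>.mul_mul_conjTranspose_same U
  exact hQb i (by linarith)

open Finset in
theorem IsHermitian.conj_one_sub_diag_eq_zero {H K : Matrix ι ι ℂ} (hH : H.IsHermitian)
    (hK : K.PosSemidef) (hK1 : (1 - K).PosSemidef) {b : ℝ}
    (htrK : K.trace = #{i | b < hH.eigenvalues i})
    (htr : ∑ i with b < hH.eigenvalues i, hH.eigenvalues i ≤ (K * H).trace.re) {i : ι}
    (hi : b < hH.eigenvalues i) :
    ((hH.eigenvectorUnitary : Matrix ι ι ℂ)ᴴ * (1 - K) *
      (hH.eigenvectorUnitary : Matrix ι ι ℂ)) i i = 0 := by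
  set U : Matrix ι ι ℂ := (hH.eigenvectorUnitary : Matrix ι ι ℂ)
  have hUU : Uᴴ * U = 1 := mem_unitaryGroup_iff'.mp hH.eigenvectorUnitary.2
  have hUU' : U * Uᴴ = 1 := mem_unitaryGroup_iff.mp hH.eigenvectorUnitary.2
  set T := Uᴴ * K * U
  have hRT : Uᴴ * (1 - K) * U = 1 - T := by simp only [T, mul_sub, sub_mul, mul_one, hUU]
  have hR : (1 - T).PosSemidef := hRT ▸ hK1.conjTranspose_mul_mul_same U
  have hc0 : ∀ j, 0 ≤ (T j j).re :=
    fun j => (Complex.nonneg_iff.mp (hK.conjTranspose_mul_mul_same U).diag_nonneg).1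
  have hc1 : ∀ j, (T j j).re ≤ 1 := fun j => by
    simpa using (Complex.nonneg_iff.mp (hR.diag_nonneg (i := j))).1
  have hsum : ∑ j, (T j j).re = #{j | b < hH.eigenvalues j} := by
    have : T.trace = K.trace := by rw [trace_mul_cycle, hUU', Matrix.one_mul]
    rw [← Complex.re_sum]
    change T.trace.re = _
    rw [this, htrK, Complex.natCast_re]
  have hle : ∑ j with b < hH.eigenvalues j, hH.eigenvalues j ≤
      ∑ j, hH.eigenvalues j * (T j j).re := by
    have : (K * H).trace = (T * diagonal fun j => (hH.eigenvalues j : ℂ)).trace := by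
      conv_lhs => rw [hH.spectral_theorem_mul]
      rw [← Matrix.mul_assoc, ← Matrix.mul_assoc, trace_mul_cycle]
      simp only [T, Matrix.mul_assoc]
      rfl
    rw [this] at htr
    simpa [trace, mul_comm] using htr
  have hci := eq_one_of_sum_filter_le_sum_mul hc0 hc1 hsum hle hi
  rw [hRT]
  apply Complex.ext
  · simp [hci]
  · exact (Complex.nonneg_iff.mp (hR.diag_nonneg (i := i))).2.symm

theorem IsHermitian.eq_add_compl_of_mul_eq {H : Matrix ι ι ℂ} (hH : H.IsHermitian)
    [DecidableEq κ] {C : Matrix ι κ ℂ} (hC : Cᴴ * C = 1)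
    (hinv : H * C = C * (Cᴴ * H * C)) :
    H = C * (Cᴴ * H * C) * Cᴴ + (1 - C * Cᴴ) * H * (1 - C * Cᴴ) := by
  set K := C * Cᴴ
  set M := Cᴴ * H * C
  have hHK : H * K = C * M * Cᴴ := by rw [← Matrix.mul_assoc, hinv]
  have hKH : K * H = C * M * Cᴴ :=
    calc K * H = (H * K)ᴴ := by simp [K, hH.eq, conjTranspose_mul, Matrix.mul_assoc]
      _ = C * M * Cᴴ := by simp [hHK, M, hH.eq, conjTranspose_mul, Matrix.mul_assoc]
  have hKHK : K * H * K = C * M * Cᴴ := by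
    rw [hKH]
    simp only [K, Matrix.mul_assoc, ← Matrix.mul_assoc Cᴴ C, hC, Matrix.one_mul]
  have : (1 - K) * H * (1 - K) = H - K * H - H * K + K * H * K := by noncomm_ring
  rw [this, hKHK, hKH, hHK]
  abel

theorem re_trace_mul_le {M G : Matrix ι ι ℂ} {a : ℝ} (hM : (M - (a : ℂ) • 1).PosSemidef)
    (hG : (1 - G).PosSemidef) :
    (M * G).trace.re ≤ M.trace.re - a * (Fintype.card ι - G.trace.re) := by
  have h := (Complex.nonneg_iff.mp (hM.trace_mul_nonneg hG)).1
  simp only [Matrix.sub_mul, Matrix.mul_sub, Matrix.mul_one, Matrix.smul_mul, Matrix.one_mul,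
    trace_sub, trace_smul, trace_one, smul_eq_mul, Complex.sub_re, Complex.re_ofReal_mul,
    Complex.natCast_re] at h
  linarith

theorem re_trace_conj_le {Q H : Matrix ι ι ℂ} (hQ : IsIdempotentElem Q) {b : ℝ}
    (hb : (Q * ((b : ℂ) • 1 - H) * Q).PosSemidef) (X : Matrix ι κ ℂ) :
    (Xᴴ * (Q * H * Q) * X).trace.re ≤ b * (Xᴴ * Q * X).trace.re := by
  have h := (Complex.nonneg_iff.mp (hb.conjTranspose_mul_mul_same X).trace_nonneg).1
  rw [Matrix.mul_sub Q, Matrix.mul_smul, Matrix.mul_one, Matrix.sub_mul, Matrix.smul_mul,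
    hQ.eq, Matrix.mul_sub, Matrix.sub_mul, trace_sub, Matrix.mul_smul, Matrix.smul_mul,
    trace_smul, smul_eq_mul, Complex.sub_re, Complex.re_ofReal_mul] at h
  linarith

end Matrix

theorem sum_sin_arccos_sv_sq {m k : ℕ} (B : Matrix (Fin m) (Fin k) ℂ)
    (hB : (1 - Bᴴ * B).PosSemidef) :
    ∑ i, Real.sin (Real.arccos (sv B i)) ^ 2 = k - (Bᴴ * B).trace.re := by
  have hBB := posSemidef_conjTranspose_mul_self B
  have h1 : ∀ i, hBB.isHermitian.eigenvalues i ≤ 1 :=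
    hBB.isHermitian.eigenvalues_le (by simpa using hB)
  rw [sv, sum_sortedDesc _ fun x => Real.sin (Real.arccos x) ^ 2,
    hBB.isHermitian.trace_eq_sum_eigenvalues, Complex.re_sum]
  calc ∑ i, Real.sin (Real.arccos √(hBB.isHermitian.eigenvalues i)) ^ 2
      = ∑ i, (1 - hBB.isHermitian.eigenvalues i) := by
        refine Finset.sum_congr rfl fun i _ => ?_
        rw [Real.sin_arccos, Real.sq_sqrt (hBB.eigenvalues_nonneg i),
          Real.sq_sqrt (sub_nonneg.mpr (h1 i))]
    _ = _ := by simp [Finset.sum_sub_distrib]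

theorem sinThetaF_sq {n k : ℕ} {X Y : Matrix (Fin n) (Fin k) ℂ} (hX : Xᴴ * X = 1)
    (hY : Yᴴ * Y = 1) : sinThetaF X Y ^ 2 = k - (Yᴴ * X * (Xᴴ * Y)).trace.re := by
  have hB : (1 - (Xᴴ * Y)ᴴ * (Xᴴ * Y)).PosSemidef := by
    have : 1 - (Xᴴ * Y)ᴴ * (Xᴴ * Y) = Yᴴ * (1 - X * Xᴴ) * Y := by
      simp only [conjTranspose_mul, conjTranspose_conjTranspose, Matrix.mul_sub,
        Matrix.sub_mul, Matrix.mul_one, hY, Matrix.mul_assoc]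
    rw [this]
    exact (posSemidef_one_sub_mul_conjTranspose hX).conjTranspose_mul_mul_same Y
  rw [sinThetaF, Real.sq_sqrt (Finset.sum_nonneg fun i _ => sq_nonneg _),
    sum_sin_arccos_sv_sq _ hB, conjTranspose_mul, conjTranspose_conjTranspose]

theorem sub_mul_sinThetaF_sq_le {n k : ℕ} {H : Matrix (Fin n) (Fin n) ℂ} (hH : H.IsHermitian)
    {Pstar P : Matrix (Fin n) (Fin k) ℂ} (hPstar : Pstarᴴ * Pstar = 1) (hP : Pᴴ * P = 1)
    (hinv : H * Pstar = Pstar * (Pstarᴴ * H * Pstar)) {a b : ℝ}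
    (ha : (Pstarᴴ * H * Pstar - (a : ℂ) • 1).PosSemidef)
    (hb : ((1 - Pstar * Pstarᴴ) * ((b : ℂ) • 1 - H) * (1 - Pstar * Pstarᴴ)).PosSemidef) :
    (a - b) * sinThetaF P Pstar ^ 2 ≤
      (Pstarᴴ * H * Pstar).trace.re - (Pᴴ * H * P).trace.re := by
  rw [sinThetaF_sq hP hPstar]
  set K := Pstar * Pstarᴴ
  set M := Pstarᴴ * H * Pstar
  set G := Pstarᴴ * P * (Pᴴ * Pstar)
  have hPHP : (Pᴴ * H * P).trace.re =
      (M * G).trace.re + (Pᴴ * ((1 - K) * H * (1 - K)) * P).trace.re := by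
    have hPKHKP : (Pᴴ * (Pstar * M * Pstarᴴ) * P).trace = (M * G).trace := by
      rw [show Pᴴ * (Pstar * M * Pstarᴴ) * P = Pᴴ * Pstar * (M * (Pstarᴴ * P)) by
        simp only [Matrix.mul_assoc], trace_mul_comm]
      simp only [G, Matrix.mul_assoc]
    conv_lhs => rw [hH.eq_add_compl_of_mul_eq hPstar hinv]
    rw [Matrix.mul_add, Matrix.add_mul, trace_add, hPKHKP, Complex.add_re]
  have hPQP : (Pᴴ * (1 - K) * P).trace.re = k - G.trace.re := by
    rw [Matrix.mul_sub, Matrix.sub_mul, Matrix.mul_one, hP, trace_sub, trace_mul_cycle,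
      ← Matrix.mul_assoc, trace_mul_cycle]
    simp [G, Matrix.mul_assoc]
  have hG : (1 - G).PosSemidef := by
    have : 1 - G = Pstarᴴ * (1 - P * Pᴴ) * Pstar := by
      simp only [G, Matrix.mul_sub, Matrix.sub_mul, Matrix.mul_one, hPstar, Matrix.mul_assoc]
    rw [this]
    exact (posSemidef_one_sub_mul_conjTranspose hP).conjTranspose_mul_mul_same Pstar
  have htop := re_trace_mul_le ha hG
  have hbot : (Pᴴ * ((1 - K) * H * (1 - K)) * P).trace.re ≤ b * (Pᴴ * (1 - K) * P).trace.re :=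
    re_trace_conj_le (isIdempotentElem_mul_conjTranspose hPstar).one_sub hb P
  rw [Fintype.card_fin] at htop
  rw [hPQP] at hbot
  linarith

theorem sinTheta_le_sqrt_eta_div_gap {n k : ℕ} (hkn : k < n)
    {H : Matrix (Fin n) (Fin n) ℂ} (hH : H.IsHermitian)
    (Pstar P : Matrix (Fin n) (Fin k) ℂ)
    (hPstar : Pstarᴴ * Pstar = 1) (hP : Pᴴ * P = 1)
    (hinv : H * Pstar = Pstar * (Pstarᴴ * H * Pstar))
    (hM : (Pstarᴴ * H * Pstar).IsHermitian)
    (htop : ∀ i : Fin k, eigsDesc hM i = eigsDesc hH (Fin.castLE hkn.le i))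
    (hgap : eigsDesc hH ⟨k, hkn⟩ < eigsDesc hH ⟨k - 1, by omega⟩) :
    sinThetaF P Pstar ≤
      Real.sqrt (((Matrix.trace (Pstarᴴ * H * Pstar)).re - (Matrix.trace (Pᴴ * H * P)).re) /
        (eigsDesc hH ⟨k - 1, by omega⟩ - eigsDesc hH ⟨k, hkn⟩)) := by
  unfold eigsDesc at htop hgap ⊢
  have hsum := sum_filter_lt_sortedDesc_eq_sum hkn htop hgap
  set b := sortedDesc hH.eigenvalues ⟨k, hkn⟩
  have hcard : (Pstar * Pstarᴴ).trace =
      (Finset.univ.filter fun i => b < hH.eigenvalues i).card := by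
    have := hsum fun _ => 1
    simp only [Finset.sum_const, nsmul_eq_mul, mul_one, Finset.card_univ, Fintype.card_fin,
      Nat.cast_inj] at this
    rw [trace_mul_comm, hPstar, trace_one, Fintype.card_fin, this]
  have htr : ∑ i with b < hH.eigenvalues i, hH.eigenvalues i =
      (Pstar * Pstarᴴ * H).trace.re := by
    rw [hsum fun x => x, Matrix.mul_assoc Pstar, trace_mul_comm Pstar,
      hM.trace_eq_sum_eigenvalues, Complex.re_sum]
    simp
  have ha := sortedDesc_sub_one_le hkn htop
  have hb := hH.posSemidef_mul_smul_one_sub_mul (posSemidef_one_sub_mul_conjTranspose hPstar)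
    fun i => hH.conj_one_sub_diag_eq_zero (posSemidef_self_mul_conjTranspose Pstar)
      (posSemidef_one_sub_mul_conjTranspose hPstar) hcard htr.le
  have hineq := sub_mul_sinThetaF_sq_le hH hPstar hP hinv (hM.posSemidef_sub_smul_one ha) hb
  refine le_trans (le_abs_self _) (Real.abs_le_sqrt ?_)
  rw [le_div_iff₀ (sub_pos.mpr hgap)]
  linarith
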